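/- (Multimeasurement Bayes estimator) Let $X \sim p$ on $\mathbb{R}^d$ and $Y_m = X + \mathcal{N}(0, \sigma^2 I_d)$ i.i.d. for $m = 1,\dots,M$, with joint smoothed density $q(\mathbf{y}) = \int \prod_m \mathcal{N}(y_m; x, \sigma^2 I_d) p(x) dx$. Then for every index $m$, $\mathbb{E}[X \mid \mathbf{Y} = \mathbf{y}] = y_m + \sigma^2 \nabla_{y_m} \log q(\mathbf{y})$; in particular the right-hand side is independent of the choice of $m$. -/

import Mathlib

open MeasureTheory Finset

/-!
Freezing every measurement except the `m`-th turns `q` into the Gaussian smoothing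
`z ↦ ∫ N(z - x) c(x) dx` of `c(x) = ∏_{k ≠ m} N(y_k - x) p(x)`. The gradient of the Gaussian,
`-(z - x) N(z - x) / σ²`, is uniformly bounded, so one may differentiate under the integral;
`σ² ∇ log` of the smoothing is then the `c N`-weighted mean of `x - z`, which is Tweedie's formula.
-/

/-- Isotropic Gaussian density `N(z; 0, σ² I_d)` on `ℝ^d`. -/
noncomputable def gaussPdf (d : ℕ) (σ : ℝ) (z : EuclideanSpace ℝ (Fin d)) : ℝ :=
  (2 * Real.pi * σ ^ 2) ^ (-(d : ℝ) / 2) * Real.exp (-‖z‖ ^ 2 / (2 * σ ^ 2))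

lemma Real.mul_exp_neg_sq_div_le {σ : ℝ} (u : ℝ) (hσ : 0 < σ) :
    u * Real.exp (-u ^ 2 / (2 * σ ^ 2)) ≤ σ := by
  set v := u / σ
  have hu : u = σ * v := by simp only [v]; field_simp
  -- `v ≤ 1 + v ^ 2 / 2 ≤ exp (v ^ 2 / 2)`
  have hv : v ≤ Real.exp (v ^ 2 / 2) := by
    nlinarith [Real.add_one_le_exp (v ^ 2 / 2), sq_nonneg (v - 1)]
  have harg : -u ^ 2 / (2 * σ ^ 2) = -(v ^ 2 / 2) := by rw [hu]; field_simp
  have hv' : v * Real.exp (-(v ^ 2 / 2)) ≤ 1 := by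
    rwa [Real.exp_neg, ← div_eq_mul_inv, div_le_one (Real.exp_pos _)]
  rw [harg, hu, mul_assoc]
  exact mul_le_of_le_one_right hσ.le hv'

namespace gaussPdf

variable {d : ℕ} {σ : ℝ}

local notation "E" => EuclideanSpace ℝ (Fin d)

lemma pos (hσ : 0 < σ) (z : E) : 0 < gaussPdf d σ z := by
  unfold gaussPdf; positivity

lemma le_const (hσ : 0 < σ) (z : E) :
    gaussPdf d σ z ≤ (2 * Real.pi * σ ^ 2) ^ (-(d : ℝ) / 2) := by
  unfold gaussPdf
  refine mul_le_of_le_one_right (by positivity) (Real.exp_le_one_iff.2 ?_)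
  rw [neg_div]
  exact neg_nonpos.2 (by positivity)

@[fun_prop]
lemma continuous : Continuous (gaussPdf d σ) := by
  unfold gaussPdf; fun_prop

lemma hasGradientAt (z : E) :
    HasGradientAt (gaussPdf d σ) ((-(σ ^ 2)⁻¹ * gaussPdf d σ z) • z) z := by
  have hexp : HasFDerivAt (fun w : E => -‖w‖ ^ 2 / (2 * σ ^ 2))
      ((-(2 * σ ^ 2)⁻¹) • (2 • innerSL ℝ z)) z := by
    refine ((hasStrictFDerivAt_norm_sq z).hasFDerivAt.const_mul
      (-(2 * σ ^ 2)⁻¹)).congr_of_eventuallyEq (.of_forall fun w => ?_)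
    simp only
    ring
  have h := hexp.exp.const_mul ((2 * Real.pi * σ ^ 2) ^ (-(d : ℝ) / 2))
  rw [hasGradientAt_iff_hasFDerivAt]
  refine h.congr_fderiv ?_
  ext v
  simp only [mul_inv_rev, neg_smul, smul_neg, neg_apply,
    smul_apply, coe_innerSL_apply, nsmul_eq_mul, Nat.cast_ofNat, smul_eq_mul,
    gaussPdf, neg_mul, map_neg, map_smul, InnerProductSpace.toDual_apply_apply, neg_inj]
  ring

lemma mul_norm_le (hσ : 0 < σ) (z : E) :
    gaussPdf d σ z * ‖z‖ ≤ (2 * Real.pi * σ ^ 2) ^ (-(d : ℝ) / 2) * σ := by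
  unfold gaussPdf
  rw [mul_assoc, mul_comm (Real.exp _)]
  gcongr
  exact Real.mul_exp_neg_sq_div_le ‖z‖ hσ

end gaussPdf

noncomputable def gaussConv (d : ℕ) (σ : ℝ) (c : EuclideanSpace ℝ (Fin d) → ℝ)
    (z : EuclideanSpace ℝ (Fin d)) : ℝ :=
  ∫ x, gaussPdf d σ (z - x) * c x

namespace gaussConv

variable {d : ℕ} {σ : ℝ} {c : EuclideanSpace ℝ (Fin d) → ℝ}

local notation "E" => EuclideanSpace ℝ (Fin d)

lemma integrable_integrand (hσ : 0 < σ) (hc : Integrable c) (z : E) :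
    Integrable fun x => gaussPdf d σ (z - x) * c x :=
  hc.bdd_mul (by fun_prop) (.of_forall fun x => by
    rw [Real.norm_of_nonneg (gaussPdf.pos hσ _).le]; exact gaussPdf.le_const hσ _)

lemma norm_integrand_smul_sub_le (hσ : 0 < σ) (z x : E) :
    ‖(gaussPdf d σ (z - x) * c x) • (z - x)‖
      ≤ (2 * Real.pi * σ ^ 2) ^ (-(d : ℝ) / 2) * σ * ‖c x‖ := by
  rw [norm_smul, norm_mul, Real.norm_of_nonneg (gaussPdf.pos hσ _).le, mul_right_comm]
  exact mul_le_mul_of_nonneg_right (gaussPdf.mul_norm_le hσ _) (norm_nonneg _)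

lemma integrable_integrand_smul_sub (hσ : 0 < σ) (hc : Integrable c) (z : E) :
    Integrable fun x => (gaussPdf d σ (z - x) * c x) • (z - x) := by
  have := hc.aestronglyMeasurable
  exact (hc.norm.const_mul _).mono' (by fun_prop)
    (.of_forall fun x => norm_integrand_smul_sub_le hσ z x)

theorem hasGradientAt (hσ : 0 < σ) (hc : Integrable c) (z : E) :
    HasGradientAt (gaussConv d σ c)
      ((-(σ ^ 2)⁻¹) • ∫ x, (gaussPdf d σ (z - x) * c x) • (z - x)) z := by
  set v : E → E → E := fun w x => (-(σ ^ 2)⁻¹) • ((gaussPdf d σ (w - x) * c x) • (w - x))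
  have hderiv : ∀ x w, HasFDerivAt (fun w => gaussPdf d σ (w - x) * c x)
      (InnerProductSpace.toDual ℝ E (v w x)) w := by
    intro x w
    refine (((gaussPdf.hasGradientAt (w - x)).hasFDerivAt.comp w
      ((hasFDerivAt_id w).sub_const x)).mul_const (c x)).congr_fderiv ?_
    ext u
    simp only [neg_mul, neg_smul, map_neg, map_smul, map_sub, ContinuousLinearMap.comp_id,
      smul_neg, neg_apply, smul_apply,
      sub_apply, InnerProductSpace.toDual_apply_apply, smul_eq_mul, neg_inj, v]
    ring
  have hv_meas : AEStronglyMeasurable (v z) := by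
    have := hc.aestronglyMeasurable
    fun_prop
  have hcomm : ∫ x, InnerProductSpace.toDual ℝ E (v z x) =
      InnerProductSpace.toDual ℝ E (∫ x, v z x) :=
    (InnerProductSpace.toDual ℝ E).toLinearIsometry.integral_comp_comm _
  rw [hasGradientAt_iff_hasFDerivAt, ← integral_smul]
  change HasFDerivAt _ (InnerProductSpace.toDual ℝ E (∫ x, v z x)) z
  rw [← hcomm]
  refine hasFDerivAt_integral_of_dominated_of_fderiv_le (Filter.univ_mem)
    (.of_forall fun w => (integrable_integrand hσ hc w).aestronglyMeasurable)
    (integrable_integrand hσ hc z) ?_ (.of_forall fun x w _ => ?_)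
    ((hc.norm.const_mul ((2 * Real.pi * σ ^ 2) ^ (-(d : ℝ) / 2) * σ)).const_mul (σ ^ 2)⁻¹)
    (.of_forall fun x w _ => hderiv x w)
  · exact (InnerProductSpace.toDual ℝ E).continuous.comp_aestronglyMeasurable hv_meas
  · rw [LinearIsometryEquiv.norm_map, norm_smul, norm_neg, norm_inv,
      Real.norm_of_nonneg (by positivity)]
    gcongr
    exact norm_integrand_smul_sub_le hσ w x

theorem inv_smul_integral_smul_eq_add_sq_smul_gradient_log (hσ : 0 < σ) (hc : Integrable c)
    (z : E) (hz : gaussConv d σ c z ≠ 0) :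
    (gaussConv d σ c z)⁻¹ • ∫ x, (gaussPdf d σ (z - x) * c x) • x =
      z + σ ^ 2 • gradient (fun w => Real.log (gaussConv d σ c w)) z := by
  have hlog : HasGradientAt (fun w => Real.log (gaussConv d σ c w))
      ((gaussConv d σ c z)⁻¹ •
        (-(σ ^ 2)⁻¹) • ∫ x, (gaussPdf d σ (z - x) * c x) • (z - x)) z := by
    rw [hasGradientAt_iff_hasFDerivAt, map_smul]
    exact ((hasGradientAt hσ hc z).hasFDerivAt.log hz)
  have hsplit : ∫ x, (gaussPdf d σ (z - x) * c x) • x =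
      gaussConv d σ c z • z - ∫ x, (gaussPdf d σ (z - x) * c x) • (z - x) := by
    rw [gaussConv, ← integral_smul_const,
      ← integral_sub ((integrable_integrand hσ hc z).smul_const z)
        (integrable_integrand_smul_sub hσ hc z)]
    simp_rw [← smul_sub, sub_sub_cancel]
  rw [hlog.gradient, hsplit]
  have hσ2 : σ ^ 2 ≠ 0 := by positivity
  match_scalars <;> field_simp

end gaussConv

lemma integral_mul_pos_of_pos_of_integral_pos {α : Type*} [MeasurableSpace α] {μ : Measure α}
    {f p : α → ℝ}
    (hf : ∀ x, 0 < f x) (hp : 0 ≤ p) (hfp : Integrable (fun x => f x * p x) μ)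
    (hp_pos : 0 < ∫ x, p x ∂μ) : 0 < ∫ x, f x * p x ∂μ := by
  have hsupp : Function.support (fun x => f x * p x) = Function.support p := by
    ext x; simp [(hf x).ne']
  rw [integral_pos_iff_support_of_nonneg (fun x => mul_nonneg (hf x).le (hp x)) hfp, hsupp]
  exact (integral_pos_iff_support_of_nonneg hp (Integrable.of_integral_ne_zero hp_pos.ne')).1
    hp_pos

theorem multimeasurement_bayes_estimator_general
    (d M : ℕ) (σ : ℝ) (hσ : 0 < σ)
    (p : EuclideanSpace ℝ (Fin d) → ℝ)
    (hp_nonneg : ∀ x, 0 ≤ p x) (hp_int : ∫ x, p x = 1)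
    (q : (Fin M → EuclideanSpace ℝ (Fin d)) → ℝ)
    (hq : ∀ y, q y = ∫ x, (∏ m, gaussPdf d σ (y m - x)) * p x)
    (y : Fin M → EuclideanSpace ℝ (Fin d)) (m : Fin M) :
    (q y)⁻¹ • (∫ x, ((∏ k, gaussPdf d σ (y k - x)) * p x) • x) =
      y m + σ ^ 2 • gradient (fun z => Real.log (q (Function.update y m z))) (y m) := by
  classical
  set c := fun x => (∏ k ∈ univ.erase m, gaussPdf d σ (y k - x)) * p x
  have hfac : ∀ z x, (∏ k, gaussPdf d σ (Function.update y m z k - x)) * p x =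
      gaussPdf d σ (z - x) * c x := by
    intro z x
    rw [← mul_prod_erase univ _ (mem_univ m), Function.update_self,
      prod_congr rfl fun k hk => by rw [Function.update_of_ne (ne_of_mem_erase hk)], mul_assoc]
  have hfac_y : ∀ x, (∏ k, gaussPdf d σ (y k - x)) * p x = gaussPdf d σ (y m - x) * c x := by
    simpa using hfac (y m)
  have hp : Integrable p := .of_integral_ne_zero (by rw [hp_int]; exact one_ne_zero)
  have hc : Integrable c := by
    refine hp.bdd_mul (c := ((2 * Real.pi * σ ^ 2) ^ (-(d : ℝ) / 2)) ^ (univ.erase m).card)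
      (by fun_prop) (.of_forall fun x => ?_)
    rw [Real.norm_of_nonneg (prod_nonneg fun k _ => (gaussPdf.pos hσ _).le), ← prod_const]
    exact prod_le_prod (fun k _ => (gaussPdf.pos hσ _).le) fun k _ => gaussPdf.le_const hσ _
  have hq_update : ∀ z, q (Function.update y m z) = gaussConv d σ c z := fun z => by
    simp only [hq, hfac, gaussConv]
  have hqy : q y = gaussConv d σ c (y m) := by simpa using hq_update (y m)
  have hq_pos : 0 < q y := by
    rw [hq]
    refine integral_mul_pos_of_pos_of_integral_pos (fun x => prod_pos fun k _ => gaussPdf.pos hσ _) hp_nonneg ?_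
      (by rw [hp_int]; exact one_pos)
    simpa only [hfac_y] using gaussConv.integrable_integrand hσ hc (y m)
  rw [hqy]
  simp_rw [hq_update, hfac_y]
  exact gaussConv.inv_smul_integral_smul_eq_add_sq_smul_gradient_log hσ hc (y m) (hqy ▸ hq_pos.ne')

/-- Multimeasurement Bayes estimator: with
`q(y) = ∫ ∏ m N(y m; x, σ² I_d) p(x) dx` the Gaussian M-density of `p`, the posterior
mean `E[X | Y = y] = (∫ x ∏ m N(y m;x,σ²I) p(x) dx) / q(y)` satisfies, for every
measurement index `m`, `E[X | Y = y] = y m + σ² ∇_{y_m} log q(y)`; in particular the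
right-hand side does not depend on `m`. -/
theorem multimeasurement_bayes_estimator
    (d M : ℕ) (hM : 1 ≤ M) (σ : ℝ) (hσ : 0 < σ)
    (p : EuclideanSpace ℝ (Fin d) → ℝ) (hp_meas : Measurable p)
    (hp_nonneg : ∀ x, 0 ≤ p x) (hp_int : ∫ x, p x = 1)
    (hp_moment : Integrable (fun x => ‖x‖ * p x))
    (q : (Fin M → EuclideanSpace ℝ (Fin d)) → ℝ)
    (hq : ∀ y, q y = ∫ x, (∏ m, gaussPdf d σ (y m - x)) * p x)
    (y : Fin M → EuclideanSpace ℝ (Fin d)) (m : Fin M) :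
    (q y)⁻¹ • (∫ x, ((∏ k, gaussPdf d σ (y k - x)) * p x) • x) =
      y m + σ ^ 2 • gradient (fun z => Real.log (q (Function.update y m z))) (y m) :=
  multimeasurement_bayes_estimator_general d M σ hσ p hp_nonneg hp_int q hq y m
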